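/- For every family (ε_p) indexed by the prime numbers with ε_p ∈ {−1, 0, 1} for every prime p, the infinite product ∏_{p prime} (1 − ε_p·p^{−2})^{−1} converges and satisfies ∏_{p prime} (1 − ε_p·p^{−2})^{−1} ≥ π²/15. (This is the content of Lemma 3.2(a): for every integer D the Euler product ζ_D(2) = ∏_p (1 − (D/p)·p^{−2})^{−1}, with (D/p) the Kronecker symbol, satisfies ζ_D(2) ≥ ζ(4)/ζ(2) = π²/15.) -/

import Mathlib

/-!
Since `ε_p ≥ -1`, every factor satisfies `(1 - ε_p p⁻²)⁻¹ ≥ (1 + p⁻²)⁻¹`, and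
`(1 + p⁻²)⁻¹ = (1 - p⁻⁴)⁻¹ / (1 - p⁻²)⁻¹`, so by the Euler products of `ζ(4)` and `ζ(2)` the
product of the smaller factors is `ζ(4) / ζ(2) = π² / 15`. Convergence comes from the
summability of the logarithms of the factors, which are `O(p⁻²)`.
-/

open Real

theorem hasProd_le_of_nonneg {ι α : Type*} [CommSemiring α] [PartialOrder α] [IsOrderedRing α]
    [TopologicalSpace α] [OrderClosedTopology α] {f g : ι → α} {a b : α}
    (hf₀ : ∀ i, 0 ≤ f i) (hfg : ∀ i, f i ≤ g i) (hf : HasProd f a) (hg : HasProd g b) :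
    a ≤ b :=
  le_of_tendsto_of_tendsto' hf hg fun _ ↦ Finset.prod_le_prod (fun i _ ↦ hf₀ i) fun i _ ↦ hfg i

theorem Real.multipliable_inv_one_add_of_summable {ι : Type*} {f : ι → ℝ} (hf : Summable f)
    (hf₁ : ∀ i, -1 < f i) : Multipliable fun i ↦ (1 + f i)⁻¹ :=
  Real.multipliable_of_summable_log (fun i ↦ inv_pos.2 (by linarith [hf₁ i])) <| by
    simpa only [Real.log_inv] using (Real.summable_log_one_add_of_summable hf).neg

theorem inv_one_add_eq_inv_one_sub_sq_div {K : Type*} [Field K] {x : K} (hx : x ≠ 1) :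
    (1 + x)⁻¹ = (1 - x ^ 2)⁻¹ / (1 - x)⁻¹ := by
  rw [inv_div_inv, show 1 - x ^ 2 = (1 - x) * (1 + x) by ring,
    div_mul_cancel_left₀ (sub_ne_zero.2 hx.symm)]

namespace Nat.Primes

theorem one_lt_cast_sq (p : Nat.Primes) : (1 : ℝ) < ((p : ℕ) : ℝ) ^ 2 := by
  exact_mod_cast Nat.one_lt_pow two_ne_zero p.2.one_lt

theorem summable_inv_cast_sq : Summable fun p : Nat.Primes ↦ (((p : ℕ) : ℝ) ^ 2)⁻¹ :=
  (Real.summable_nat_pow_inv.mpr one_lt_two).comp_injective Nat.Primes.coe_nat_injective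

theorem hasProd_inv_one_sub_inv_pow_iff {k : ℕ} (hk : 1 < k) {x : ℝ} :
    HasProd (fun p : Nat.Primes ↦ (1 - (((p : ℕ) : ℝ) ^ k)⁻¹)⁻¹) x ↔ riemannZeta k = x := by
  have hζ : HasProd (Complex.ofRealHom ∘ fun p : Nat.Primes ↦ (1 - (((p : ℕ) : ℝ) ^ k)⁻¹)⁻¹)
      (riemannZeta k) :=
    (riemannZeta_eulerProduct_hasProd (s := k) (by simpa using hk)).congr_fun fun p ↦ by
      simp [Complex.cpow_neg]
  rw [← Complex.isometry_ofReal.isUniformInducing.isInducing.hasProd_iff (g := Complex.ofRealHom)]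
  exact ⟨hζ.unique, fun h ↦ by rw [Complex.ofRealHom_eq_coe, ← h]; exact hζ⟩

theorem hasProd_inv_one_add_inv_sq :
    HasProd (fun p : Nat.Primes ↦ (1 + (((p : ℕ) : ℝ) ^ 2)⁻¹)⁻¹) (π ^ 2 / 15) := by
  have hζ₂ := (hasProd_inv_one_sub_inv_pow_iff (x := π ^ 2 / 6) one_lt_two).2
    (by simp [riemannZeta_two])
  have hζ₄ := (hasProd_inv_one_sub_inv_pow_iff (k := 4) (x := π ^ 4 / 90) (by norm_num)).2
    (by simp [riemannZeta_four])
  have h := hζ₄.div₀ hζ₂ (by positivity)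
  rw [show π ^ 4 / 90 / (π ^ 2 / 6) = π ^ 2 / 15 by field_simp; ring] at h
  refine h.congr_fun fun p ↦ ?_
  rw [inv_one_add_eq_inv_one_sub_sq_div (inv_ne_one.2 (one_lt_cast_sq p).ne'), inv_pow,
    ← pow_mul]

end Nat.Primes

theorem euler_product_lower_bound (ε : Nat.Primes → ℝ)
    (hε : ∀ p, ε p = -1 ∨ ε p = 0 ∨ ε p = 1) :
    Multipliable (fun p : Nat.Primes => (1 - ε p / ((p : ℕ) : ℝ) ^ 2)⁻¹) ∧
      Real.pi ^ 2 / 15 ≤ ∏' p : Nat.Primes, (1 - ε p / ((p : ℕ) : ℝ) ^ 2)⁻¹ := by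
  have hε₁ : ∀ p, |ε p| ≤ 1 := fun p ↦ by rcases hε p with h | h | h <;> norm_num [h]
  have hq : ∀ p : Nat.Primes, 0 < ((p : ℕ) : ℝ) ^ 2 :=
    fun p ↦ one_pos.trans (Nat.Primes.one_lt_cast_sq p)
  have hterm : ∀ p, |ε p / ((p : ℕ) : ℝ) ^ 2| ≤ (((p : ℕ) : ℝ) ^ 2)⁻¹ := fun p ↦ by
    rw [abs_div, abs_of_pos (hq p), div_eq_mul_inv]
    exact mul_le_of_le_one_left (inv_nonneg.2 (hq p).le) (hε₁ p)
  have hterm_lt_one : ∀ p, |ε p / ((p : ℕ) : ℝ) ^ 2| < 1 :=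
    fun p ↦ (hterm p).trans_lt (inv_lt_one_of_one_lt₀ (Nat.Primes.one_lt_cast_sq p))
  have hmult : Multipliable fun p : Nat.Primes ↦ (1 - ε p / ((p : ℕ) : ℝ) ^ 2)⁻¹ := by
    simpa only [← sub_eq_add_neg] using Real.multipliable_inv_one_add_of_summable
      (Nat.Primes.summable_inv_cast_sq.of_norm_bounded fun p ↦ (norm_neg _).trans_le (hterm p))
      (fun p ↦ neg_lt_neg ((le_abs_self _).trans_lt (hterm_lt_one p)))
  refine ⟨hmult, hasProd_le_of_nonneg (fun p ↦ by positivity) (fun p ↦ ?_)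
    Nat.Primes.hasProd_inv_one_add_inv_sq hmult.hasProd⟩
  refine inv_anti₀ (by linarith [(abs_lt.1 (hterm_lt_one p)).2]) ?_
  linarith [(abs_le.1 (hterm p)).1]
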